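/- Let S be a linear schema containing a label l, let ρl be an executable prefix of a terminating path through S, let V be a set of variables and let S' be a quotient of S containing l. Then S' is a (ρl,V)-dynamic slice of S if and only if there is no path τ through S' compatible with ρ, with τ either a terminating path through S' of length < |proj_{S'}(ρ)l| or a path of length exactly |proj_{S'}(ρ)l|, such that τ has no prefix of the form ρ'l where proj_{S'}(ρ) is l-reducible to ρ' and M[ρ']_e(v) = M[ρ]_e(v) for all v ∈ V. (Here one uses that every path ρ'l through S' with proj_{S'}(ρ) l-reducible to ρ' has length at most |proj_{S'}(ρ)l|.) -/

import Mathlib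

namespace SchemaSlicing

/- Function symbols, predicate symbols, variables and labels are drawn from
   fixed infinite sets; we model each by ℕ. Arities are implicit: each
   occurrence of a symbol carries the list of its arguments. -/
abbrev Var := ℕ
abbrev Fn := ℕ
abbrev Pn := ℕ
abbrev Label := ℕ

/-- Structured program schemas. `loop` is the while-construct. -/
inductive Schema : Type where
  | skip : Schema
  | label : Label → Schema
  | assign : Var → Fn → List Var → Schema
  | seq : Schema → Schema → Schema
  | ite : Pn → List Var → Schema → Schema → Schema
  | loop : Pn → List Var → Schema → Schema
  deriving DecidableEq

/-- Letters of the alphabet L(S): labels, assignment letters ⟨y:=f(x)⟩ and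
    predicate letters ⟨p(x),Z⟩. -/
inductive Letter : Type where
  | lab : Label → Letter
  | asgn : Var → Fn → List Var → Letter
  | pred : Pn → List Var → Bool → Letter
  deriving DecidableEq

/-- Symbols: function symbols, predicate symbols and labels. -/
inductive Sym : Type where
  | fn : Fn → Sym
  | pn : Pn → Sym
  | lab : Label → Sym
  deriving DecidableEq

/-- The list of occurrences of function symbols, predicate symbols and labels in a schema. -/
def Schema.syms : Schema → List Sym
  | .skip => []
  | .label l => [Sym.lab l]
  | .assign _ f _ => [Sym.fn f]
  | .seq S₁ S₂ => S₁.syms ++ S₂.syms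
  | .ite p _ S₁ S₂ => Sym.pn p :: (S₁.syms ++ S₂.syms)
  | .loop q _ T => Sym.pn q :: T.syms

/-- A schema is linear if no function symbol, predicate symbol or label occurs
    more than once in it. -/
def Schema.Linear (S : Schema) : Prop := S.syms.Nodup

/-- Π(S), the set of terminating paths through S. -/
inductive Paths : Schema → List Letter → Prop where
  | skip : Paths Schema.skip []
  | label (l : Label) : Paths (Schema.label l) [Letter.lab l]
  | assign (y : Var) (f : Fn) (xs : List Var) :
      Paths (Schema.assign y f xs) [Letter.asgn y f xs]
  | seq {S₁ S₂ w₁ w₂} : Paths S₁ w₁ → Paths S₂ w₂ → Paths (Schema.seq S₁ S₂) (w₁ ++ w₂)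
  | iteTrue {p xs S₁ S₂ w} : Paths S₁ w →
      Paths (Schema.ite p xs S₁ S₂) (Letter.pred p xs true :: w)
  | iteFalse {p xs S₁ S₂ w} : Paths S₂ w →
      Paths (Schema.ite p xs S₁ S₂) (Letter.pred p xs false :: w)
  | loopFalse (q : Pn) (xs : List Var) (T : Schema) :
      Paths (Schema.loop q xs T) [Letter.pred q xs false]
  | loopTrue {q xs T w ws} : Paths T w → Paths (Schema.loop q xs T) ws →
      Paths (Schema.loop q xs T) (Letter.pred q xs true :: (w ++ ws))

/-- ρ ∈ pre(Π(S)): ρ is a (finite) path through S.  (Every finite path through S,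
    including every finite prefix of an infinite path, is a prefix of a terminating path.) -/
def PathPrefix (S : Schema) (ρ : List Letter) : Prop := ∃ τ, Paths S τ ∧ ρ <+: τ

/-- `IsQuotient S' S`: S' is obtained from S by deleting zero or more statements. -/
inductive IsQuotient : Schema → Schema → Prop where
  | skip (S : Schema) : IsQuotient Schema.skip S
  | refl (S : Schema) : IsQuotient S S
  | seq {S₁' S₁ S₂' S₂} : IsQuotient S₁' S₁ → IsQuotient S₂' S₂ →
      IsQuotient (Schema.seq S₁' S₂') (Schema.seq S₁ S₂)
  | loop {q xs T' T} : IsQuotient T' T → IsQuotient (Schema.loop q xs T') (Schema.loop q xs T)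
  | ite {p xs T₁ S₁ T₂ S₂} : IsQuotient T₁ S₁ → IsQuotient T₂ S₂ →
      IsQuotient (Schema.ite p xs T₁ T₂) (Schema.ite p xs S₁ S₂)

/-- The symbol (function symbol, predicate symbol or label) of a letter. -/
def Letter.sym : Letter → Sym
  | .lab l => Sym.lab l
  | .asgn _ f _ => Sym.fn f
  | .pred p _ _ => Sym.pn p

/-- proj_{S'}(ρ): delete from ρ all letters whose function or predicate symbols,
    or labels, do not occur in S'. -/
def proj (S' : Schema) (ρ : List Letter) : List Letter :=
  ρ.filter (fun m => decide (m.sym ∈ S'.syms))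

/-- An interpretation over a domain D. -/
structure Interp (D : Type) where
  fn : Fn → List D → D
  pn : Pn → List D → Bool

/-- One execution step on (non-⊥) states; predicate letters and labels do not change the state. -/
def execLetter {D : Type} (i : Interp D) (d : Var → D) : Letter → (Var → D)
  | .asgn y f xs => Function.update d y (i.fn f (xs.map d))
  | _ => d

/-- M[schema(σ)]^i_d : the state after executing the assignments of the word σ from d. -/
def execWord {D : Type} (i : Interp D) (d : Var → D) (σ : List Letter) : Var → D :=
  σ.foldl (execLetter i) d

/-- ρ is consistent with (i,d): every predicate letter in ρ is evaluated by i in accordance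
    with the sequence of assignments preceding it. -/
def Consistent {D : Type} (i : Interp D) (d : Var → D) (ρ : List Letter) : Prop :=
  ∀ σ p xs Z, (σ ++ [Letter.pred p xs Z]) <+: ρ → i.pn p (xs.map (execWord i d σ)) = Z

/-- `ρ` is a finite prefix of the path π(S,i,d). -/
def PrefixOfPi {D : Type} (i : Interp D) (d : Var → D) (S : Schema) (ρ : List Letter) : Prop :=
  PathPrefix S ρ ∧ Consistent i d ρ

/-- The set of finite prefixes of π(S,i,d); this set determines the
    (possibly infinite) word π(S,i,d) uniquely. -/
def PiPrefixes {D : Type} (i : Interp D) (d : Var → D) (S : Schema) : Set (List Letter) :=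
  {ρ | PrefixOfPi i d S ρ}

open Classical in
/-- The final state M[S]^i_d; `none` represents ⊥ (non-termination). -/
noncomputable def finalState {D : Type} (i : Interp D) (d : Var → D) (S : Schema) :
    Option (Var → D) :=
  if h : ∃ ρ, Paths S ρ ∧ Consistent i d ρ then some (execWord i d h.choose) else none

/-- The Herbrand domain Term(F,V). -/
inductive Tm : Type where
  | var : Var → Tm
  | app : Fn → List Tm → Tm

/-- A Herbrand interpretation: function symbols act as term constructors. -/
def Interp.IsHerbrand (j : Interp Tm) : Prop := ∀ f ts, j.fn f ts = Tm.app f ts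

/-- The natural state e. -/
def natState : Var → Tm := Tm.var

/-- A fixed Herbrand interpretation (the predicate part is irrelevant for executing
    assignments). -/
def hInterp : Interp Tm := ⟨fun f ts => Tm.app f ts, fun _ _ => true⟩

/-- M[σ]_e : the Herbrand state after executing the assignments of σ from the natural state. -/
def hExec (σ : List Letter) : Var → Tm := execWord hInterp natState σ

/-- p(t) = Y is a consequence of μ. -/
def Consequence (μ : List Letter) (p : Pn) (ts : List Tm) (Y : Bool) : Prop :=
  ∃ μ' xs, (μ' ++ [Letter.pred p xs Y]) <+: μ ∧ xs.map (hExec μ') = ts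

/-- ρ is executable: ρ is a prefix of π(S,i,d) for some domain, interpretation and state. -/
def Executable (S : Schema) (ρ : List Letter) : Prop :=
  ∃ (D : Type) (i : Interp D) (d : Var → D), PrefixOfPi i d S ρ

/-- ρ (through S) and ρ' (through S') are compatible: for some domain, interpretation i
    and state d they are prefixes of π(S,i,d) and π(S',i,d) respectively. -/
def Compatible (S : Schema) (ρ : List Letter) (S' : Schema) (ρ' : List Letter) : Prop :=
  ∃ (D : Type) (i : Interp D) (d : Var → D), PrefixOfPi i d S ρ ∧ PrefixOfPi i d S' ρ'

/-- `Sub T S`: T occurs as a subschema of S. -/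
inductive Sub : Schema → Schema → Prop where
  | refl (S : Schema) : Sub S S
  | seqL {T S₁ S₂} : Sub T S₁ → Sub T (Schema.seq S₁ S₂)
  | seqR {T S₁ S₂} : Sub T S₂ → Sub T (Schema.seq S₁ S₂)
  | iteT {T p xs S₁ S₂} : Sub T S₁ → Sub T (Schema.ite p xs S₁ S₂)
  | iteF {T p xs S₁ S₂} : Sub T S₂ → Sub T (Schema.ite p xs S₁ S₂)
  | loop {T q xs B} : Sub T B → Sub T (Schema.loop q xs B)

/-- Simple l-reductions of paths through S. -/
inductive SimpleRed (S : Schema) (l : Label) : List Letter → List Letter → Prop where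
  | loopRed {p xs B σ α γ} :
      Sub (Schema.loop p xs B) S → Paths B σ → Sym.lab l ∉ B.syms →
      SimpleRed S l (α ++ [Letter.pred p xs true] ++ σ ++ [Letter.pred p xs false] ++ γ)
                    (α ++ [Letter.pred p xs false] ++ γ)
  | iteRed {p xs S₁ S₂ σ α γ} {Z : Bool} :
      Sub (Schema.ite p xs S₁ S₂) S → Paths (if Z then S₁ else S₂) σ →
      (if Z then S₂ else S₁) = Schema.skip →
      Sym.lab l ∉ S₁.syms → Sym.lab l ∉ S₂.syms →
      SimpleRed S l (α ++ [Letter.pred p xs Z] ++ σ ++ γ)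
                    (α ++ [Letter.pred p xs (!Z)] ++ γ)

/-- ρ is l-reducible to ρ': zero or more simple l-reductions. -/
def Reducible (S : Schema) (l : Label) : List Letter → List Letter → Prop :=
  Relation.ReflTransGen (SimpleRed S l)

/-- maxpre(σ,σ') : the maximal common prefix of two words. -/
def maxpre : List Letter → List Letter → List Letter
  | a :: as, b :: bs => if a = b then a :: maxpre as bs else []
  | _, _ => []

/-- The sequence of function and predicate symbols through which a path passes. -/
def symSeq (ρ : List Letter) : List Sym :=
  ρ.filterMap fun m => match m with
    | Letter.asgn _ f _ => some (Sym.fn f)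
    | Letter.pred p _ _ => some (Sym.pn p)
    | Letter.lab _ => none

/-- S' (a quotient of S containing l) is a (ρl,V)-path-faithful dynamic slice of S:
    (1) every variable of V defines the same term after proj_{S'}(ρ) as after ρ, and
    (2) every maximal path through S' compatible with ρ has proj_{S'}(ρ) as a prefix
        (equivalently: whenever ρ is a prefix of π(S,i,d), proj_{S'}(ρ) is a prefix
        of π(S',i,d)). -/
def IsPFDS (S : Schema) (ρ : List Letter) (l : Label) (V : Set Var) (S' : Schema) : Prop :=
  (∀ v ∈ V, hExec (proj S' ρ) v = hExec ρ v) ∧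
  ∀ (D : Type) (i : Interp D) (d : Var → D),
    PrefixOfPi i d S ρ → PrefixOfPi i d S' (proj S' ρ)

/-- S' (a quotient of S containing l) is a (ρl,V)-dynamic slice of S: every maximal path
    through S' compatible with ρ has a prefix ρ' to which proj_{S'}(ρ) is l-reducible and
    such that every variable of V defines the same term after ρ' as after ρ. -/
def IsDS (S : Schema) (ρ : List Letter) (l : Label) (V : Set Var) (S' : Schema) : Prop :=
  ∀ (D : Type) (i : Interp D) (d : Var → D), PrefixOfPi i d S ρ →
    ∃ ρ', PrefixOfPi i d S' ρ' ∧ Reducible S' l (proj S' ρ) ρ' ∧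
      ∀ v ∈ V, hExec ρ' v = hExec ρ v

/-- T' is a (ρ,V)-path-faithful dynamic end slice of T
    (S = T l with a label l at the end, S' = T' l). -/
def IsPFDSEnd (T : Schema) (ρ : List Letter) (V : Set Var) (T' : Schema) : Prop :=
  IsPFDS (Schema.seq T (Schema.label 0)) ρ 0 V (Schema.seq T' (Schema.label 0))

/-- T' is a (ρ,V)-dynamic end slice of T. -/
def IsDSEnd (T : Schema) (ρ : List Letter) (V : Set Var) (T' : Schema) : Prop :=
  IsDS (Schema.seq T (Schema.label 0)) ρ 0 V (Schema.seq T' (Schema.label 0))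

/-- The set of function and predicate symbols of a schema. -/
def fpsyms (T : Schema) : Set Sym := {s | s ∈ T.syms ∧ ∀ l : Label, s ≠ Sym.lab l}

/-- T is a minimal (ρ,V)-path-faithful dynamic end slice of S: it is a path-faithful
    dynamic end slice, and no quotient of S with a strictly smaller set of function and
    predicate symbols is a (ρ,V)-dynamic end slice of S. -/
def MinimalPFDSEnd (S : Schema) (ρ : List Letter) (V : Set Var) (T : Schema) : Prop :=
  IsPFDSEnd S ρ V T ∧
  ∀ T', IsQuotient T' S → fpsyms T' ⊂ fpsyms T → ¬ IsDSEnd S ρ V T'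

/-! All finite prefixes of `π(S', i, d)` are comparable, since two paths through a schema part
only at a predicate letter, which `(i, d)` evaluates one way, and a terminating path has no
proper extension. A candidate `ρ' l` is no longer than `proj_{S'}(ρ) l`, so once it is known to
be a path through `S'` it lies in the prefix of `π(S', i, d)` of that length (or in all of
`π(S', i, d)`, if that terminates earlier); this gives both directions.

That `ρ' l` is a path through `S'` is where linearity enters. Projection maps terminating paths
of a linear schema onto terminating paths of its quotients, and the unique predicate symbol of a
loop or conditional locates the segment of a path that runs through it, so that a loop iteration
can be excised, or a branch exchanged for an empty one, without leaving the set of paths. -/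

theorem Sub.syms_sublist {T S : Schema} (h : Sub T S) : T.syms.Sublist S.syms := by
  induction h with
  | refl => exact List.Sublist.refl _
  | seqL _ ih => exact ih.trans (List.sublist_append_left _ _)
  | seqR _ ih => exact ih.trans (List.sublist_append_right _ _)
  | iteT _ ih => exact ih.trans ((List.sublist_append_left _ _).trans (List.sublist_cons_self _ _))
  | iteF _ ih => exact ih.trans ((List.sublist_append_right _ _).trans (List.sublist_cons_self _ _))
  | loop _ ih => exact ih.trans (List.sublist_cons_self _ _)

theorem IsQuotient.syms_sublist {S' S : Schema} (h : IsQuotient S' S) : S'.syms.Sublist S.syms := by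
  induction h with
  | skip => exact List.nil_sublist _
  | refl => exact List.Sublist.refl _
  | seq _ _ ih₁ ih₂ => exact ih₁.append ih₂
  | loop _ ih => exact ih.cons_cons _
  | ite _ _ ih₁ ih₂ => exact (ih₁.append ih₂).cons_cons _

theorem Paths.sym_mem {S : Schema} {τ : List Letter} (h : Paths S τ) {m : Letter} (hm : m ∈ τ) :
    m.sym ∈ S.syms := by
  induction h with
  | skip => simp at hm
  | label | assign | loopFalse =>
    simp only [List.mem_singleton] at hm
    simp [hm, Letter.sym, Schema.syms]
  | seq _ _ ih₁ ih₂ =>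
    rcases List.mem_append.1 hm with h | h
    · exact List.mem_append_left _ (ih₁ h)
    · exact List.mem_append_right _ (ih₂ h)
  | iteTrue _ ih | iteFalse _ ih =>
    rcases List.mem_cons.1 hm with rfl | h
    · simp [Letter.sym, Schema.syms]
    · simp [Schema.syms, ih h]
  | loopTrue _ _ ih₁ ih₂ =>
    rcases List.mem_cons.1 hm with rfl | h
    · simp [Letter.sym, Schema.syms]
    · rcases List.mem_append.1 h with h | h
      · exact List.mem_cons_of_mem _ (ih₁ h)
      · exact ih₂ h

theorem Paths.exists : ∀ S : Schema, ∃ τ, Paths S τ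
  | .skip => ⟨_, .skip⟩
  | .label l => ⟨_, .label l⟩
  | .assign y f xs => ⟨_, .assign y f xs⟩
  | .seq S₁ S₂ =>
    have ⟨_, h₁⟩ := Paths.exists S₁
    have ⟨_, h₂⟩ := Paths.exists S₂
    ⟨_, .seq h₁ h₂⟩
  | .ite _ _ S₁ _ =>
    have ⟨_, h⟩ := Paths.exists S₁
    ⟨_, .iteTrue h⟩
  | .loop q xs T => ⟨_, .loopFalse q xs T⟩

theorem Paths.loop_induction {q : Pn} {xs : List Var} {B : Schema} {P : List Letter → Prop}
    (exit : P [Letter.pred q xs false])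
    (iterate : ∀ {w ws}, Paths B w → Paths (Schema.loop q xs B) ws → P ws →
      P (Letter.pred q xs true :: (w ++ ws))) {τ : List Letter}
    (h : Paths (Schema.loop q xs B) τ) : P τ := by
  generalize hL : Schema.loop q xs B = L at h
  induction h with
  | loopFalse => cases hL; exact exit
  | loopTrue hw hws _ ih => cases hL; exact iterate hw hws (ih rfl)
  | _ => cases hL

theorem Paths.eq_or_diverge {S : Schema} {π₁ : List Letter} (h₁ : Paths S π₁) {π₂ : List Letter}
    (h₂ : Paths S π₂) :
    π₁ = π₂ ∨ ∃ (α : List Letter) (p : Pn) (xs : List Var) (Z : Bool) (σ₁ σ₂ : List Letter),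
      π₁ = α ++ Letter.pred p xs Z :: σ₁ ∧ π₂ = α ++ Letter.pred p xs (!Z) :: σ₂ := by
  induction h₁ generalizing π₂ with
  | skip | label | assign => cases h₂; exact .inl rfl
  | @seq S₁ S₂ w₁ w₂ _ _ ih₁ ih₂ =>
    cases h₂ with | @seq _ _ _ w₂' h₁' h₂' =>
    rcases ih₁ h₁' with rfl | ⟨α, p, xs, Z, σ₁, σ₂, rfl, rfl⟩
    · rcases ih₂ h₂' with rfl | ⟨α, p, xs, Z, σ₁, σ₂, rfl, rfl⟩
      · exact .inl rfl
      · exact .inr ⟨w₁ ++ α, p, xs, Z, σ₁, σ₂, by simp, by simp⟩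
    · exact .inr ⟨α, p, xs, Z, σ₁ ++ w₂, σ₂ ++ w₂', by simp, by simp⟩
  | @iteTrue p xs _ _ w _ ih =>
    cases h₂ with
    | iteTrue h₂ =>
      rcases ih h₂ with rfl | ⟨α, q, ys, Z, σ₁, σ₂, rfl, rfl⟩
      · exact .inl rfl
      · exact .inr ⟨Letter.pred p xs true :: α, q, ys, Z, σ₁, σ₂, rfl, rfl⟩
    | iteFalse => exact .inr ⟨[], p, xs, true, w, _, rfl, rfl⟩
  | @iteFalse p xs _ _ w _ ih =>
    cases h₂ with
    | iteFalse h₂ =>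
      rcases ih h₂ with rfl | ⟨α, q, ys, Z, σ₁, σ₂, rfl, rfl⟩
      · exact .inl rfl
      · exact .inr ⟨Letter.pred p xs false :: α, q, ys, Z, σ₁, σ₂, rfl, rfl⟩
    | iteTrue => exact .inr ⟨[], p, xs, false, w, _, rfl, rfl⟩
  | loopFalse q xs =>
    cases h₂ with
    | loopFalse => exact .inl rfl
    | loopTrue => exact .inr ⟨[], q, xs, false, [], _, rfl, rfl⟩
  | @loopTrue q xs _ w ws _ _ ih₁ ih₂ =>
    cases h₂ with
    | loopFalse => exact .inr ⟨[], q, xs, true, w ++ ws, [], rfl, rfl⟩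
    | @loopTrue _ _ _ _ ws' h₁' h₂' =>
      rcases ih₁ h₁' with rfl | ⟨α, p, ys, Z, σ₁, σ₂, rfl, rfl⟩
      · rcases ih₂ h₂' with rfl | ⟨α, p, ys, Z, σ₁, σ₂, rfl, rfl⟩
        · exact .inl rfl
        · exact .inr ⟨Letter.pred q xs true :: (w ++ α), p, ys, Z, σ₁, σ₂, by simp, by simp⟩
      · exact .inr ⟨Letter.pred q xs true :: α, p, ys, Z, σ₁ ++ ws, σ₂ ++ ws', by simp, by simp⟩

theorem Paths.eq_of_prefix {S : Schema} {π₁ π₂ : List Letter} (h₁ : Paths S π₁)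
    (h₂ : Paths S π₂) (hp : π₁ <+: π₂) : π₁ = π₂ := by
  rcases h₁.eq_or_diverge h₂ with h | ⟨α, p, xs, Z, σ₁, σ₂, rfl, rfl⟩
  · exact h
  · obtain ⟨t, ht⟩ := hp
    cases Z <;> simp at ht

section ListSplitting

variable {β : Type*} {w₁ w₂ α π δ : List β}

theorem append_eq_append_append_cases (h : w₁ ++ w₂ = α ++ π ++ δ) :
    (∃ δ₁, w₁ = α ++ π ++ δ₁ ∧ δ = δ₁ ++ w₂) ∨ (∃ α₂, α = w₁ ++ α₂ ∧ w₂ = α₂ ++ π ++ δ) ∨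
      ∃ π₁ π₂, π = π₁ ++ π₂ ∧ π₁ ≠ [] ∧ π₂ ≠ [] ∧ w₁ = α ++ π₁ ∧ w₂ = π₂ ++ δ := by
  rcases List.append_eq_append_iff.1 h with ⟨a, hαπ, rfl⟩ | ⟨c, rfl, rfl⟩
  · rcases List.append_eq_append_iff.1 hαπ.symm with ⟨c, rfl, rfl⟩ | ⟨b, rfl, rfl⟩
    · exact .inr (.inl ⟨c, rfl, by simp⟩)
    · by_cases hb : b = []
      · subst hb; exact .inr (.inl ⟨[], by simp, by simp⟩)
      by_cases ha : a = []
      · subst ha; exact .inl ⟨[], by simp, by simp⟩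
      exact .inr (.inr ⟨b, a, rfl, hb, ha, rfl, rfl⟩)
  · exact .inl ⟨c, by simp, rfl⟩

theorem append_eq_append_append_left (h : w₁ ++ w₂ = α ++ π ++ δ) (hπ : π ≠ [])
    (hw₂ : ∀ x ∈ π, x ∉ w₂) : ∃ δ₁, w₁ = α ++ π ++ δ₁ ∧ δ = δ₁ ++ w₂ := by
  rcases append_eq_append_append_cases h with h | ⟨α₂, -, rfl⟩ | ⟨π₁, π₂, rfl, -, hπ₂, -, rfl⟩
  · exact h
  · obtain ⟨x, hx⟩ := List.exists_mem_of_ne_nil π hπ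
    exact absurd (by simp [hx]) (hw₂ x hx)
  · obtain ⟨x, hx⟩ := List.exists_mem_of_ne_nil π₂ hπ₂
    exact absurd (by simp [hx]) (hw₂ x (by simp [hx]))

theorem append_eq_append_append_right (h : w₁ ++ w₂ = α ++ π ++ δ) (hπ : π ≠ [])
    (hw₁ : ∀ x ∈ π, x ∉ w₁) : ∃ α₂, α = w₁ ++ α₂ ∧ w₂ = α₂ ++ π ++ δ := by
  rcases append_eq_append_append_cases h with ⟨δ₁, rfl, -⟩ | h | ⟨π₁, π₂, rfl, hπ₁, -, rfl, -⟩
  · obtain ⟨x, hx⟩ := List.exists_mem_of_ne_nil π hπ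
    exact absurd (by simp [hx]) (hw₁ x hx)
  · exact h
  · obtain ⟨x, hx⟩ := List.exists_mem_of_ne_nil π₁ hπ₁
    exact absurd (by simp [hx]) (hw₁ x (by simp [hx]))

end ListSplitting

theorem Paths.ite_head {p : Pn} {xs : List Var} {S₁ S₂ : Schema} {π : List Letter}
    (h : Paths (Schema.ite p xs S₁ S₂) π) : ∃ Z π₀, π = Letter.pred p xs Z :: π₀ := by
  cases h <;> exact ⟨_, _, rfl⟩

theorem Paths.loop_head {q : Pn} {xs : List Var} {B : Schema} {π : List Letter}
    (h : Paths (Schema.loop q xs B) π) : ∃ Z π₀, π = Letter.pred q xs Z :: π₀ := by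
  cases h <;> exact ⟨_, _, rfl⟩

theorem Paths.replace_prefix {S : Schema} {π π' δ : List Letter} (hπ : Paths S π)
    (hπ' : Paths S π') (h : Paths S (π ++ δ)) : Paths S (π' ++ δ) := by
  obtain rfl : δ = [] := by simpa using hπ.eq_of_prefix h ⟨δ, rfl⟩
  simpa using hπ'

/-- The predicate letter of the conditional occurs in a path through it only at the head,
so `α` must be empty. -/
theorem Paths.replace_ite {p : Pn} {xs : List Var} {S₁ S₂ : Schema}
    (hp : Sym.pn p ∉ S₁.syms ++ S₂.syms) {π π' : List Letter}
    (hπ : Paths (Schema.ite p xs S₁ S₂) π) (hπ' : Paths (Schema.ite p xs S₁ S₂) π')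
    {α δ : List Letter} (h : Paths (Schema.ite p xs S₁ S₂) (α ++ π ++ δ)) :
    Paths (Schema.ite p xs S₁ S₂) (α ++ π' ++ δ) := by
  rcases α with _ | ⟨a, α⟩
  · exact hπ.replace_prefix hπ' h
  obtain ⟨Z, π₀, rfl⟩ := hπ.ite_head
  exfalso
  have hmem : Letter.pred p xs Z ∈ α ++ Letter.pred p xs Z :: π₀ ++ δ := by simp
  rw [List.cons_append, List.cons_append] at h
  generalize α ++ Letter.pred p xs Z :: π₀ ++ δ = w at h hmem
  cases h with
  | iteTrue hw => exact hp (List.mem_append_left _ (hw.sym_mem hmem))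
  | iteFalse hw => exact hp (List.mem_append_right _ (hw.sym_mem hmem))

/-- `π` starts with the loop predicate, which does not occur in the body, so `π` starts at an
iteration boundary and the rest of the path from there on is again a path through the loop. -/
theorem Paths.replace_loop {q : Pn} {xs : List Var} {B : Schema} (hq : Sym.pn q ∉ B.syms)
    {π π' : List Letter} (hπ : Paths (Schema.loop q xs B) π)
    (hπ' : Paths (Schema.loop q xs B) π') {α δ : List Letter}
    (h : Paths (Schema.loop q xs B) (α ++ π ++ δ)) :
    Paths (Schema.loop q xs B) (α ++ π' ++ δ) := by
  obtain ⟨Z, π₀, hπ₀⟩ := hπ.loop_head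
  refine Paths.loop_induction (P := fun τ => ∀ {α}, α ++ π ++ δ = τ →
    Paths (Schema.loop q xs B) (α ++ π' ++ δ)) ?_ ?_ h rfl
  · intro α hτ
    rcases α with _ | ⟨a, α⟩
    · exact hπ.replace_prefix hπ' (hτ ▸ Paths.loopFalse q xs B)
    · simp [hπ₀] at hτ
  · intro w ws hw hws ih α hτ
    rcases α with _ | ⟨a, α⟩
    · exact hπ.replace_prefix hπ' (hτ ▸ Paths.loopTrue hw hws)
    simp only [List.cons_append, List.cons.injEq] at hτ
    obtain ⟨rfl, hτ⟩ := hτ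
    rw [List.append_assoc, List.append_eq_append_iff] at hτ
    rcases hτ with ⟨bs, rfl, hbs⟩ | ⟨as, rfl, hws'⟩
    · rcases bs with _ | ⟨b, bs⟩
      · simpa using Paths.loopTrue hw (ih (α := []) (by simpa using hbs))
      · simp only [hπ₀, List.cons_append, List.cons.injEq] at hbs
        obtain ⟨rfl, -⟩ := hbs
        exact absurd (hw.sym_mem (m := Letter.pred q xs Z) (by simp)) hq
    · simpa using Paths.loopTrue hw (ih (α := as) (by simpa using hws'.symm))

/-- Linearity locates a segment `π` whose symbols all lie in the subschema `T` inside the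
part of the path that runs through `T`; so a replacement that is valid in `T` is valid in `S`. -/
theorem Paths.replace_of_sub {T : Schema} {π π' : List Letter} (hπ : π ≠ [])
    (hπT : ∀ m ∈ π, m.sym ∈ T.syms)
    (hT : ∀ {α δ}, Paths T (α ++ π ++ δ) → Paths T (α ++ π' ++ δ))
    {S : Schema} (hsub : Sub T S) (hnd : S.syms.Nodup) {α δ : List Letter}
    (h : Paths S (α ++ π ++ δ)) : Paths S (α ++ π' ++ δ) := by
  have hπS {S : Schema} (hsub : Sub T S) : ∀ m ∈ π, m.sym ∈ S.syms :=
    fun m hm => hsub.syms_sublist.subset (hπT m hm)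
  have avoid {S S₂ : Schema} {w : List Letter} (hsub : Sub T S)
      (hdisj : S.syms.Disjoint S₂.syms) (hw : Paths S₂ w) : ∀ x ∈ π, x ∉ w :=
    fun x hx hxw => hdisj (hπS hsub x hx) (hw.sym_mem hxw)
  induction hsub generalizing α δ with
  | refl => exact hT h
  | @seqL S₁ S₂ hsub ih =>
    have hdisj := List.disjoint_of_nodup_append hnd
    generalize hτ : α ++ π ++ δ = τ at h
    cases h with | seq h₁ h₂ =>
    obtain ⟨δ₁, rfl, rfl⟩ := append_eq_append_append_left hτ.symm hπ (avoid hsub hdisj h₂)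
    simpa using (ih hnd.of_append_left h₁).seq h₂
  | @seqR S₁ S₂ hsub ih =>
    have hdisj := List.disjoint_of_nodup_append hnd
    generalize hτ : α ++ π ++ δ = τ at h
    cases h with | seq h₁ h₂ =>
    obtain ⟨α₂, rfl, rfl⟩ := append_eq_append_append_right hτ.symm hπ (avoid hsub hdisj.symm h₁)
    simpa using h₁.seq (ih hnd.of_append_right h₂)
  | @iteT p xs S₁ S₂ hsub ih =>
    obtain ⟨hp, hnd'⟩ := List.nodup_cons.1 hnd
    have hpπ : ∀ Z, ∀ x ∈ π, x ∉ [Letter.pred p xs Z] := fun Z x hx hxp => by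
      obtain rfl := List.mem_singleton.1 hxp
      exact hp (List.mem_append_left _ (hπS hsub _ hx))
    generalize hτ : α ++ π ++ δ = τ at h
    cases h with
    | iteTrue hw =>
      obtain ⟨α₂, rfl, rfl⟩ := append_eq_append_append_right hτ.symm hπ (hpπ true)
      simpa using (ih hnd'.of_append_left hw).iteTrue (p := p) (xs := xs) (S₂ := S₂)
    | iteFalse hw =>
      obtain ⟨α₂, -, rfl⟩ := append_eq_append_append_right hτ.symm hπ (hpπ false)
      obtain ⟨x, hx⟩ := List.exists_mem_of_ne_nil π hπ
      exact (avoid hsub (List.disjoint_of_nodup_append hnd') hw x hx (by simp [hx])).elim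
  | @iteF p xs S₁ S₂ hsub ih =>
    obtain ⟨hp, hnd'⟩ := List.nodup_cons.1 hnd
    have hpπ : ∀ Z, ∀ x ∈ π, x ∉ [Letter.pred p xs Z] := fun Z x hx hxp => by
      obtain rfl := List.mem_singleton.1 hxp
      exact hp (List.mem_append_right _ (hπS hsub _ hx))
    generalize hτ : α ++ π ++ δ = τ at h
    cases h with
    | iteFalse hw =>
      obtain ⟨α₂, rfl, rfl⟩ := append_eq_append_append_right hτ.symm hπ (hpπ false)
      simpa using (ih hnd'.of_append_right hw).iteFalse (p := p) (xs := xs) (S₁ := S₁)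
    | iteTrue hw =>
      obtain ⟨α₂, -, rfl⟩ := append_eq_append_append_right hτ.symm hπ (hpπ true)
      obtain ⟨x, hx⟩ := List.exists_mem_of_ne_nil π hπ
      exact (avoid hsub (List.disjoint_of_nodup_append hnd').symm hw x hx (by simp [hx])).elim
  | @loop q xs B hsub ih =>
    obtain ⟨hq, hndB⟩ := List.nodup_cons.1 hnd
    have hqπ : ∀ Z, Letter.pred q xs Z ∉ π := fun Z hZ => hq (hπS hsub _ hZ)
    refine Paths.loop_induction (P := fun τ => ∀ {α}, α ++ π ++ δ = τ →
      Paths (Schema.loop q xs B) (α ++ π' ++ δ)) ?_ ?_ h rfl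
    · intro α hτ
      obtain ⟨x, hx⟩ := List.exists_mem_of_ne_nil π hπ
      have : x ∈ [Letter.pred q xs false] := hτ ▸ by simp [hx]
      exact (hqπ false (List.mem_singleton.1 this ▸ hx)).elim
    · intro w ws hw hws ihws α hτ
      obtain ⟨α₂, rfl, hsplit⟩ := append_eq_append_append_right (w₁ := [Letter.pred q xs true])
        hτ.symm hπ (fun x hx hxq => hqπ true (List.mem_singleton.1 hxq ▸ hx))
      rcases append_eq_append_append_cases hsplit with ⟨δ₁, rfl, rfl⟩ | ⟨α₃, rfl, rfl⟩ |
        ⟨π₁, π₂, rfl, -, hπ₂, -, rfl⟩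
      · simpa using (ih hndB hw).loopTrue hws
      · simpa using hw.loopTrue (ihws rfl)
      · obtain ⟨Z, π₀, hπ₀⟩ := hws.loop_head
        obtain ⟨y, π₂, rfl⟩ := List.exists_cons_of_ne_nil hπ₂
        simp only [List.cons_append, List.cons.injEq] at hπ₀
        exact (hqπ Z (by simp [← hπ₀.1])).elim

theorem Paths.ite_branch {p : Pn} {xs : List Var} {S₁ S₂ : Schema} {Z : Bool} {σ : List Letter}
    (h : Paths (if Z then S₁ else S₂) σ) :
    Paths (Schema.ite p xs S₁ S₂) (Letter.pred p xs Z :: σ) := by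
  cases Z
  · exact .iteFalse h
  · exact .iteTrue h

theorem SimpleRed.length_le {S : Schema} {l : Label} {μ μ' : List Letter}
    (h : SimpleRed S l μ μ') : μ'.length ≤ μ.length := by
  cases h with
  | loopRed => simp; omega
  | iteRed => simp

theorem Reducible.length_le {S : Schema} {l : Label} {μ μ' : List Letter}
    (h : Reducible S l μ μ') : μ'.length ≤ μ.length := by
  induction h with
  | refl => exact le_rfl
  | tail _ hred ih => exact hred.length_le.trans ih

theorem SimpleRed.paths_append {S : Schema} {l : Label} {μ μ' : List Letter}
    (hnd : S.syms.Nodup) (hred : SimpleRed S l μ μ') {κ : List Letter}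
    (h : Paths S (μ ++ κ)) : Paths S (μ' ++ κ) := by
  cases hred with
  | @loopRed p xs B σ α γ hsub hσ _ =>
    have hq : Sym.pn p ∉ B.syms := (List.nodup_cons.1 (hsub.syms_sublist.nodup hnd)).1
    have hπ := hσ.loopTrue (Paths.loopFalse p xs B)
    have hπ' := Paths.loopFalse p xs B
    have := Paths.replace_of_sub (List.cons_ne_nil _ _) (fun _ hm => hπ.sym_mem hm)
      (fun h => hπ.replace_loop hq hπ' h) hsub hnd (α := α) (δ := γ ++ κ) (by simpa using h)
    simpa using this
  | @iteRed p xs S₁ S₂ σ α γ Z hsub hσ hskip _ _ =>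
    have hp : Sym.pn p ∉ S₁.syms ++ S₂.syms :=
      (List.nodup_cons.1 (hsub.syms_sublist.nodup hnd)).1
    have hπ : Paths (Schema.ite p xs S₁ S₂) _ := Paths.ite_branch hσ
    have hπ' : Paths (Schema.ite p xs S₁ S₂) [Letter.pred p xs (!Z)] :=
      Paths.ite_branch (by cases Z <;> simp at hskip ⊢ <;> simpa [hskip] using Paths.skip)
    have := Paths.replace_of_sub (List.cons_ne_nil _ _) (fun _ hm => hπ.sym_mem hm)
      (fun h => Paths.replace_ite hp hπ hπ' h) hsub hnd (α := α) (δ := γ ++ κ) (by simpa using h)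
    simpa using this

theorem Reducible.pathPrefix_append {S : Schema} {l : Label} {μ μ' : List Letter}
    (hnd : S.syms.Nodup) (hred : Reducible S l μ μ') {κ : List Letter}
    (h : PathPrefix S (μ ++ κ)) : PathPrefix S (μ' ++ κ) := by
  induction hred with
  | refl => exact h
  | tail _ hred ih =>
    obtain ⟨_, hfull, rest, rfl⟩ := ih
    exact ⟨_, hred.paths_append hnd (κ := κ ++ rest) (by simpa using hfull), by simp⟩

theorem proj_congr {A B : Schema} {τ : List Letter}
    (h : ∀ m ∈ τ, m.sym ∈ A.syms ↔ m.sym ∈ B.syms) : proj A τ = proj B τ :=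
  List.filter_congr fun m hm => by simp [h m hm]

theorem proj_append (S' : Schema) (τ₁ τ₂ : List Letter) :
    proj S' (τ₁ ++ τ₂) = proj S' τ₁ ++ proj S' τ₂ :=
  List.filter_append ..

theorem proj_cons_pred {S' : Schema} {p : Pn} {xs : List Var} {Z : Bool} {τ : List Letter}
    (hp : Sym.pn p ∈ S'.syms) :
    proj S' (Letter.pred p xs Z :: τ) = Letter.pred p xs Z :: proj S' τ := by
  simp [proj, Letter.sym, hp]

theorem Paths.proj_of_isQuotient {S' S : Schema} (hq : IsQuotient S' S) (hnd : S.syms.Nodup)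
    {τ : List Letter} (h : Paths S τ) : Paths S' (proj S' τ) := by
  have avoid {A B B' : Schema} {w : List Letter} (hw : Paths A w)
      (hAB : ∀ s ∈ A.syms, s ∉ B.syms) (hB' : IsQuotient B' B) : ∀ m ∈ w, m.sym ∉ B'.syms :=
    fun m hm hmB' => hAB _ (hw.sym_mem hm) (hB'.syms_sublist.subset hmB')
  induction hq generalizing τ with
  | skip => simpa [proj, Schema.syms] using Paths.skip
  | refl S => rwa [proj, List.filter_eq_self.2 fun m hm => by simpa using h.sym_mem hm]
  | @seq S₁' S₁ S₂' S₂ hq₁ hq₂ ih₁ ih₂ =>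
    cases h with | @seq _ _ w₁ w₂ h₁ h₂ =>
    have hdisj := List.disjoint_of_nodup_append hnd
    rw [proj_append, proj_congr (B := S₁') (τ := w₁), proj_congr (B := S₂') (τ := w₂)]
    · exact (ih₁ hnd.of_append_left h₁).seq (ih₂ hnd.of_append_right h₂)
    · intro m hm
      simp [Schema.syms, avoid h₂ (fun s hs₂ hs₁ => hdisj hs₁ hs₂) hq₁ m hm]
    · intro m hm
      simp [Schema.syms, avoid h₁ (fun s hs₁ hs₂ => hdisj hs₁ hs₂) hq₂ m hm]
  | @loop q xs T' T hq ih =>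
    obtain ⟨hqT, hndT⟩ := List.nodup_cons.1 hnd
    have hqS' : Sym.pn q ∈ (Schema.loop q xs T').syms := List.mem_cons_self ..
    refine Paths.loop_induction (P := fun τ => Paths (Schema.loop q xs T') (proj _ τ)) ?_ ?_ h
    · rw [proj_cons_pred hqS']; exact Paths.loopFalse q xs T'
    · intro w ws hw _ hws
      rw [proj_cons_pred hqS', proj_append, proj_congr (B := T') (τ := w)]
      · exact (ih hndT hw).loopTrue hws
      · intro m hm
        have : m.sym ≠ Sym.pn q := fun h => hqT (h ▸ hw.sym_mem hm)
        simp [Schema.syms, this]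
  | @ite p xs T₁ S₁ T₂ S₂ hq₁ hq₂ ih₁ ih₂ =>
    obtain ⟨hp, hnd'⟩ := List.nodup_cons.1 hnd
    have hdisj := List.disjoint_of_nodup_append hnd'
    have hpS' : Sym.pn p ∈ (Schema.ite p xs T₁ T₂).syms := List.mem_cons_self ..
    cases h with
    | iteTrue hw =>
      rw [proj_cons_pred hpS', proj_congr (B := T₁) (τ := _)]
      · exact (ih₁ hnd'.of_append_left hw).iteTrue
      · intro m hm
        have : m.sym ≠ Sym.pn p := fun h => hp (h ▸ List.mem_append_left _ (hw.sym_mem hm))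
        simp [Schema.syms, this, avoid hw (fun s hs₁ hs₂ => hdisj hs₁ hs₂) hq₂ m hm]
    | iteFalse hw =>
      rw [proj_cons_pred hpS', proj_congr (B := T₂) (τ := _)]
      · exact (ih₂ hnd'.of_append_right hw).iteFalse
      · intro m hm
        have : m.sym ≠ Sym.pn p := fun h => hp (h ▸ List.mem_append_right _ (hw.sym_mem hm))
        simp [Schema.syms, this, avoid hw (fun s hs₂ hs₁ => hdisj hs₁ hs₂) hq₁ m hm]

theorem PathPrefix.proj {S' S : Schema} (hq : IsQuotient S' S) (hnd : S.syms.Nodup)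
    {ρ : List Letter} (h : PathPrefix S ρ) : PathPrefix S' (proj S' ρ) :=
  let ⟨_, hπ, hpre⟩ := h
  ⟨_, hπ.proj_of_isQuotient hq hnd, hpre.filter _⟩

theorem proj_append_label {S' : Schema} {ρ : List Letter} {l : Label}
    (hl : Sym.lab l ∈ S'.syms) :
    proj S' (ρ ++ [Letter.lab l]) = proj S' ρ ++ [Letter.lab l] := by
  simp [proj, List.filter_append, Letter.sym, hl]

theorem PathPrefix.nil (S : Schema) : PathPrefix S [] :=
  let ⟨_, h⟩ := Paths.exists S
  ⟨_, h, List.nil_prefix⟩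

theorem PathPrefix.of_prefix {S : Schema} {τ₁ τ₂ : List Letter} (h : PathPrefix S τ₂)
    (hp : τ₁ <+: τ₂) : PathPrefix S τ₁ :=
  let ⟨_, hπ, hpre⟩ := h
  ⟨_, hπ, hp.trans hpre⟩

section Execution

variable {D : Type} {i : Interp D}

theorem execWord_append (d : Var → D) (a b : List Letter) :
    execWord i d (a ++ b) = execWord i (execWord i d a) b :=
  List.foldl_append ..

theorem Consistent.nil (d : Var → D) : Consistent i d [] :=
  fun _ _ _ _ h => by simpa using h.length_le

theorem Consistent.of_prefix {d : Var → D} {τ₁ τ₂ : List Letter} (hp : τ₁ <+: τ₂)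
    (h : Consistent i d τ₂) : Consistent i d τ₁ :=
  fun σ p xs Z hσ => h σ p xs Z (hσ.trans hp)

theorem Consistent.singleton {d : Var → D} {m : Letter}
    (h : ∀ p xs Z, m = Letter.pred p xs Z → i.pn p (xs.map d) = Z) : Consistent i d [m] := by
  intro σ p xs Z hσ
  obtain rfl : σ = [] := by simpa using hσ.length_le
  have hm : Letter.pred p xs Z = m := by simpa using hσ
  exact h p xs Z hm.symm

theorem Consistent.append {d : Var → D} {a b : List Letter} (ha : Consistent i d a)
    (hb : Consistent i (execWord i d a) b) : Consistent i d (a ++ b) := by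
  intro σ p xs Z hσ
  rcases le_or_gt (σ ++ [Letter.pred p xs Z]).length a.length with hle | hlt
  · exact ha σ p xs Z (List.prefix_of_prefix_length_le hσ (a.prefix_append b) hle)
  · obtain ⟨σ', rfl⟩ : a <+: σ := List.prefix_of_prefix_length_le (a.prefix_append b)
      ((σ.prefix_append _).trans hσ) (by simpa [Nat.lt_succ_iff] using hlt)
    rw [execWord_append]
    exact hb σ' p xs Z ((List.prefix_append_right_inj a).1 (by simpa using hσ))

theorem Consistent.cons_pred {d : Var → D} {p : Pn} {xs : List Var} {τ : List Letter}
    (h : Consistent i d τ) :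
    Consistent i d (Letter.pred p xs (i.pn p (xs.map d)) :: τ) :=
  (Consistent.singleton (by simp)).append h

theorem Consistent.append_label {d : Var → D} {τ : List Letter} (h : Consistent i d τ)
    (l : Label) : Consistent i d (τ ++ [Letter.lab l]) :=
  h.append (Consistent.singleton (by simp))

theorem PrefixOfPi.prefix_or_prefix {d : Var → D} {S : Schema} {τ₁ τ₂ : List Letter}
    (h₁ : PrefixOfPi i d S τ₁) (h₂ : PrefixOfPi i d S τ₂) : τ₁ <+: τ₂ ∨ τ₂ <+: τ₁ := by
  obtain ⟨⟨π₁, hπ₁, hp₁⟩, hc₁⟩ := h₁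
  obtain ⟨⟨π₂, hπ₂, hp₂⟩, hc₂⟩ := h₂
  rcases hπ₁.eq_or_diverge hπ₂ with rfl | ⟨α, p, xs, Z, σ₁, σ₂, rfl, rfl⟩
  · exact List.prefix_or_prefix_of_prefix hp₁ hp₂
  have hα₁ : α <+: α ++ Letter.pred p xs Z :: σ₁ := α.prefix_append _
  have hα₂ : α <+: α ++ Letter.pred p xs (!Z) :: σ₂ := α.prefix_append _
  rcases le_or_gt τ₁.length α.length with hle₁ | hgt₁
  · exact List.prefix_or_prefix_of_prefix
      ((List.prefix_of_prefix_length_le hp₁ hα₁ hle₁).trans hα₂) hp₂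
  rcases le_or_gt τ₂.length α.length with hle₂ | hgt₂
  · exact List.prefix_or_prefix_of_prefix hp₁
      ((List.prefix_of_prefix_length_le hp₂ hα₂ hle₂).trans hα₁)
  -- both prefixes contain the diverging predicate letter, which they must evaluate alike
  have e₁ := hc₁ α p xs Z (List.prefix_of_prefix_length_le ⟨σ₁, by simp⟩ hp₁ (by simpa))
  have e₂ := hc₂ α p xs (!Z) (List.prefix_of_prefix_length_le ⟨σ₂, by simp⟩ hp₂ (by simpa))
  cases Z <;> simp_all

theorem PrefixOfPi.prefix_of_paths_or_length_le {d : Var → D} {S : Schema}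
    {τ₁ τ₂ : List Letter} (h₁ : PrefixOfPi i d S τ₁) (h₂ : PrefixOfPi i d S τ₂)
    (h : Paths S τ₂ ∨ τ₁.length ≤ τ₂.length) : τ₁ <+: τ₂ := by
  rcases h₁.prefix_or_prefix h₂ with h12 | h21
  · exact h12
  rcases h with hτ₂ | hle
  · obtain ⟨π, hπ, hpre⟩ := h₁.1
    rw [hτ₂.eq_of_prefix hπ (h21.trans hpre)]
    exact hpre
  · rw [h21.eq_of_length (le_antisymm h21.length_le hle)]

end Execution

theorem exists_prefixOfPi_truncation {D : Type} (i : Interp D) (S : Schema) (n : ℕ)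
    (d : Var → D) :
    ∃ τ, PrefixOfPi i d S τ ∧ ((Paths S τ ∧ τ.length ≤ n) ∨ τ.length = n) := by
  have zero (S : Schema) (d : Var → D) :
      ∃ τ, PrefixOfPi i d S τ ∧ ((Paths S τ ∧ τ.length ≤ 0) ∨ τ.length = 0) :=
    ⟨[], ⟨.nil S, .nil d⟩, .inr rfl⟩
  have single {S : Schema} {m : Letter} (hm : Paths S [m]) (hpred : ∀ p xs Z, m ≠ .pred p xs Z)
      (n : ℕ) (d : Var → D) :
      ∃ τ, PrefixOfPi i d S τ ∧ ((Paths S τ ∧ τ.length ≤ n + 1) ∨ τ.length = n + 1) :=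
    ⟨[m], ⟨⟨_, hm, List.prefix_refl _⟩, .singleton fun p xs Z h => (hpred p xs Z h).elim⟩,
      .inl ⟨hm, by simp⟩⟩
  induction S generalizing n d with
  | skip => exact ⟨[], ⟨⟨_, .skip, List.prefix_refl _⟩, .nil d⟩, .inl ⟨.skip, by simp⟩⟩
  | label l =>
    rcases n with _ | n
    · exact zero _ d
    · exact single (.label l) (by simp) n d
  | assign y f xs =>
    rcases n with _ | n
    · exact zero _ d
    · exact single (.assign y f xs) (by simp) n d
  | seq S₁ S₂ ih₁ ih₂ =>
    obtain ⟨τ₁, ⟨⟨π₁, hπ₁, hpre₁⟩, hc₁⟩, h₁ | hlen₁⟩ := ih₁ n d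
    · obtain ⟨hP₁, hlen₁⟩ := h₁
      obtain ⟨τ₂, ⟨⟨π₂, hπ₂, hpre₂⟩, hc₂⟩, h₂⟩ := ih₂ (n - τ₁.length) (execWord i d τ₁)
      refine ⟨τ₁ ++ τ₂, ⟨⟨_, hP₁.seq hπ₂, (List.prefix_append_right_inj τ₁).2 hpre₂⟩,
        hc₁.append hc₂⟩, ?_⟩
      rcases h₂ with ⟨hP₂, hlen₂⟩ | hlen₂
      · exact .inl ⟨hP₁.seq hP₂, by simp; omega⟩
      · exact .inr (by simp; omega)
    · obtain ⟨π₂, hπ₂⟩ := Paths.exists S₂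
      exact ⟨τ₁, ⟨⟨_, hπ₁.seq hπ₂, hpre₁.trans (List.prefix_append _ _)⟩, hc₁⟩, .inr hlen₁⟩
  | ite p xs S₁ S₂ ih₁ ih₂ =>
    rcases n with _ | n
    · exact zero _ d
    generalize hZ : i.pn p (xs.map d) = Z
    obtain ⟨τ, ⟨⟨π, hπ, hpre⟩, hc⟩, hτ⟩ : ∃ τ, PrefixOfPi i d (if Z then S₁ else S₂) τ ∧
        ((Paths (if Z then S₁ else S₂) τ ∧ τ.length ≤ n) ∨ τ.length = n) := by
      cases Z
      exacts [ih₂ n d, ih₁ n d]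
    refine ⟨Letter.pred p xs Z :: τ, ⟨⟨_, Paths.ite_branch hπ,
      List.cons_prefix_cons.2 ⟨rfl, hpre⟩⟩, hZ ▸ hc.cons_pred⟩, ?_⟩
    rcases hτ with ⟨hP, hlen⟩ | hlen
    · exact .inl ⟨Paths.ite_branch hP, by simp; omega⟩
    · exact .inr (by simp [hlen])
  | loop q xs B ih =>
    induction n using Nat.strong_induction_on generalizing d with
    | _ n IH =>
    rcases n with _ | n
    · exact zero _ d
    cases hZ : i.pn q (xs.map d)
    · exact ⟨_, ⟨⟨_, .loopFalse q xs B, List.prefix_refl _⟩, hZ ▸ (Consistent.nil d).cons_pred⟩,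
        .inl ⟨.loopFalse q xs B, by simp⟩⟩
    obtain ⟨τB, ⟨⟨πB, hπB, hpreB⟩, hcB⟩, hB | hlenB⟩ := ih n d
    · obtain ⟨hPB, hlenB⟩ := hB
      obtain ⟨τR, ⟨⟨πR, hπR, hpreR⟩, hcR⟩, hR⟩ :=
        IH (n - τB.length) (by omega) (execWord i d τB)
      refine ⟨Letter.pred q xs true :: (τB ++ τR), ⟨⟨_, hPB.loopTrue hπR,
        List.cons_prefix_cons.2 ⟨rfl, (List.prefix_append_right_inj τB).2 hpreR⟩⟩,
        hZ ▸ (hcB.append hcR).cons_pred⟩, ?_⟩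
      rcases hR with ⟨hPR, hlenR⟩ | hlenR
      · exact .inl ⟨hPB.loopTrue hPR, by simp; omega⟩
      · exact .inr (by simp; omega)
    · obtain ⟨πR, hπR⟩ := Paths.exists (Schema.loop q xs B)
      exact ⟨Letter.pred q xs true :: τB, ⟨⟨_, hπB.loopTrue hπR,
        List.cons_prefix_cons.2 ⟨rfl, hpreB.trans (List.prefix_append _ _)⟩⟩,
        hZ ▸ hcB.cons_pred⟩, .inr (by simp [hlenB])⟩

theorem statement_14_general (S : Schema) (l : Label) (ρ : List Letter) (V : Set Var) (S' : Schema)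
    (hlin : S.Linear)
    (hpath : PathPrefix S (ρ ++ [Letter.lab l]))
    (hquot : IsQuotient S' S) (hlS' : Sym.lab l ∈ S'.syms) :
    (IsDS S ρ l V S' ↔
      ¬ ∃ τ : List Letter, PathPrefix S' τ ∧ Compatible S ρ S' τ ∧
        ((Paths S' τ ∧ τ.length < (proj S' ρ).length + 1) ∨
          τ.length = (proj S' ρ).length + 1) ∧
        ¬ ∃ ρ' : List Letter, (ρ' ++ [Letter.lab l]) <+: τ ∧
            Reducible S' l (proj S' ρ) ρ' ∧ ∀ v ∈ V, hExec ρ' v = hExec ρ v) ∧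
    (∀ ρ' : List Letter, PathPrefix S' (ρ' ++ [Letter.lab l]) →
      Reducible S' l (proj S' ρ) ρ' →
      (ρ' ++ [Letter.lab l]).length ≤ (proj S' ρ).length + 1) := by
  have hlin' : S'.syms.Nodup := hquot.syms_sublist.nodup hlin
  have hproj : PathPrefix S' (proj S' ρ ++ [Letter.lab l]) :=
    proj_append_label hlS' ▸ hpath.proj hquot hlin
  refine ⟨⟨fun hDS => ?_, fun hne D i d hρ => ?_⟩, fun ρ' _ hred => by simpa using hred.length_le⟩
  · rintro ⟨τ, -, ⟨D, i, d, hρ, hτ⟩, hlen, hno⟩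
    obtain ⟨ρ', hρ', hred, hV⟩ := hDS D i d hρ
    have hρ'l : PrefixOfPi i d S' (ρ' ++ [Letter.lab l]) :=
      ⟨hred.pathPrefix_append hlin' hproj, hρ'.2.append_label l⟩
    refine hno ⟨ρ', hρ'l.prefix_of_paths_or_length_le hτ ?_, hred, hV⟩
    have := hred.length_le
    rcases hlen with ⟨hP, -⟩ | hlen
    · exact .inl hP
    · exact .inr (by simp; omega)
  · obtain ⟨τ, hτ, hlen⟩ := exists_prefixOfPi_truncation i S' ((proj S' ρ).length + 1) d
    by_contra hno
    refine hne ⟨τ, hτ.1, ⟨D, i, d, hρ, hτ⟩, ?_, fun ⟨ρ', hpre, hred, hV⟩ => hno ⟨ρ', ?_, hred, hV⟩⟩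
    · rcases hlen with ⟨hP, hle⟩ | hlen
      · exact (lt_or_eq_of_le hle).imp (⟨hP, ·⟩) id
      · exact .inr hlen
    · have hρ'τ := (List.prefix_append _ _).trans hpre
      exact ⟨hτ.1.of_prefix hρ'τ, hτ.2.of_prefix hρ'τ⟩

/-- S' is a (ρl,V)-dynamic slice of S iff there is no path τ through S'
    compatible with ρ — with τ either a terminating path through S' of length < |proj_{S'}(ρ)l|
    or a path of length exactly |proj_{S'}(ρ)l| — such that τ has no prefix ρ'l with
    proj_{S'}(ρ) l-reducible to ρ' and M[ρ']_e(v) = M[ρ]_e(v) for all v ∈ V.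
    (Moreover every path ρ'l through S' with proj_{S'}(ρ) l-reducible to ρ' has length at
    most |proj_{S'}(ρ)l|.) -/
theorem statement_14 (S : Schema) (l : Label) (ρ : List Letter) (V : Set Var) (S' : Schema)
    (hlin : S.Linear) (hlS : Sym.lab l ∈ S.syms)
    (hpath : PathPrefix S (ρ ++ [Letter.lab l]))
    (hexec : Executable S (ρ ++ [Letter.lab l]))
    (hquot : IsQuotient S' S) (hlS' : Sym.lab l ∈ S'.syms) :
    (IsDS S ρ l V S' ↔
      ¬ ∃ τ : List Letter, PathPrefix S' τ ∧ Compatible S ρ S' τ ∧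
        ((Paths S' τ ∧ τ.length < (proj S' ρ).length + 1) ∨
          τ.length = (proj S' ρ).length + 1) ∧
        ¬ ∃ ρ' : List Letter, (ρ' ++ [Letter.lab l]) <+: τ ∧
            Reducible S' l (proj S' ρ) ρ' ∧ ∀ v ∈ V, hExec ρ' v = hExec ρ v) ∧
    (∀ ρ' : List Letter, PathPrefix S' (ρ' ++ [Letter.lab l]) →
      Reducible S' l (proj S' ρ) ρ' →
      (ρ' ++ [Letter.lab l]).length ≤ (proj S' ρ).length + 1) :=
  statement_14_general S l ρ V S' hlin hpath hquot hlS'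

end SchemaSlicing
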